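/- With the data E₀, E₁, π₀, π₁, U, T₀, T₁, N₀, N₁ and V(T₀,T₁) as in the context: every (λ̃, φ̃) ∈ V(T₀,T₁)^⊥ satisfies λ̃(u) = λ̃(0) − π₀(∫₀ᵘ φ̃(s) ds) for all u ∈ [0,1], λ̃(0) ∈ π₀(N₀), and U⁻¹(λ̃(1)) ∈ π₁(N₁). -/

import Mathlib

open MeasureTheory Set

/-- An element of `W(E)`: a pair `(λ, φ)` of continuous maps on `[0,1]` with values in `E`
and in the dual `E* = E →L[ℝ] ℝ` respectively. -/
structure WPair (E : Type*) [NormedAddCommGroup E] [NormedSpace ℝ E] where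
  lam : ℝ → E
  phi : ℝ → E →L[ℝ] ℝ
  lam_cont : ContinuousOn lam (Icc 0 1)
  phi_cont : ContinuousOn phi (Icc 0 1)

/-- The alternating bilinear form `Ω((λ,φ),(λ',φ')) = ∫₀¹ (φ(u)(λ'(u)) − φ'(u)(λ(u))) du`. -/
noncomputable def Omega {E : Type*} [NormedAddCommGroup E] [NormedSpace ℝ E]
    (w w' : WPair E) : ℝ :=
  ∫ u in (0:ℝ)..(1:ℝ), (w.phi u (w'.lam u) - w'.phi u (w.lam u))

/-- The `Ω`-orthogonal of a subset of `W(E)`. -/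
def orth {E : Type*} [NormedAddCommGroup E] [NormedSpace ℝ E] (A : Set (WPair E)) :
    Set (WPair E) :=
  {w | ∀ a ∈ A, Omega a w = 0}

/-- The annihilator `N = { α ∈ E* : α vanishes on T }` of a subspace `T ⊆ E`. -/
def Ann {E : Type*} [NormedAddCommGroup E] [NormedSpace ℝ E] (T : Submodule ℝ E) :
    Set (E →L[ℝ] ℝ) :=
  {α | ∀ v ∈ T, α v = 0}

/-- The space `V(T₀,T₁)` of solutions `(λ,φ)` of `λ(u) = λ(0) − π₀ ∫₀ᵘ φ` with boundary
conditions `λ(0) ∈ T₀` and `U⁻¹(λ(1)) ∈ T₁`. -/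
noncomputable def VSet {E₀ E₁ : Type*}
    [NormedAddCommGroup E₀] [NormedSpace ℝ E₀]
    [NormedAddCommGroup E₁] [NormedSpace ℝ E₁]
    (π₀ : (E₀ →L[ℝ] ℝ) →ₗ[ℝ] E₀) (U : E₁ ≃L[ℝ] E₀)
    (T₀ : Submodule ℝ E₀) (T₁ : Submodule ℝ E₁) : Set (WPair E₀) :=
  {w | (∀ u ∈ Icc (0:ℝ) 1, w.lam u = w.lam 0 - π₀ (∫ s in (0:ℝ)..u, w.phi s)) ∧
       w.lam 0 ∈ T₀ ∧ U.symm (w.lam 1) ∈ T₁}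

/-!
Pair `w` with the elements of `V(T₀,T₁)` obtained by solving `λ' = -π₀ c` from `λ(0) = v`.
Integration by parts and skewness of `π₀` turn `Ω` into
`∫₀¹ c(λ̃ + π₀ ∫₀ᵘ φ̃) - (∫₀¹ φ̃)(v) - (∫₀¹ c)(π₀ ∫₀¹ φ̃)`.
Taking `v = 0` and `c = g • α` with `∫₀¹ g = 0` gives the differential equation by
du Bois-Reymond; a constant `c = α` then leaves `α (λ̃ 1) = (∫₀¹ φ̃) v` whenever `v ∈ T₀` and
`U⁻¹ (v - π₀ α) ∈ T₁`. The boundary conditions follow because for skew `π` the image `π(Ann T)`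
is cut out by the functionals `α` with `π α ∈ T`.
-/
section Annihilator

variable {E : Type*} [NormedAddCommGroup E] [NormedSpace ℝ E]

def annSubmodule (T : Submodule ℝ E) : Submodule ℝ (E →L[ℝ] ℝ) where
  carrier := Ann T
  add_mem' ha hb v hv := by simp [ha v hv, hb v hv]
  zero_mem' _ _ := rfl
  smul_mem' r _ ha v hv := by simp [ha v hv]

variable [FiniteDimensional ℝ E]

theorem exists_dual_eq_zero_of_notMem {T : Submodule ℝ E} {x : E} (hx : x ∉ T) :
    ∃ α : E →L[ℝ] ℝ, (∀ v ∈ T, α v = 0) ∧ α x ≠ 0 := by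
  obtain ⟨f, hfx, hTf⟩ := T.exists_le_ker_of_notMem hx
  exact ⟨LinearMap.toContinuousLinearMap f, fun v hv => hTf hv, hfx⟩

/-- By duality it suffices that every `α` vanishing on `π(Ann T)` has `π α ∈ T`; otherwise some
`γ ∈ Ann T` with `γ (π α) ≠ 0` would give `α (π γ) ≠ 0`. -/
theorem mem_map_annSubmodule_of_forall {π : (E →L[ℝ] ℝ) →ₗ[ℝ] E}
    (hπ : ∀ α β : E →L[ℝ] ℝ, α (π β) = - β (π α)) {T : Submodule ℝ E} {x : E}
    (hx : ∀ α : E →L[ℝ] ℝ, π α ∈ T → α x = 0) : x ∈ (annSubmodule T).map π := by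
  by_contra hxN
  obtain ⟨α, hαN, hαx⟩ := exists_dual_eq_zero_of_notMem hxN
  refine hαx (hx α ?_)
  by_contra hαT
  obtain ⟨γ, hγT, hγα⟩ := exists_dual_eq_zero_of_notMem hαT
  exact hγα (by rw [hπ, hαN _ ⟨γ, hγT, rfl⟩, neg_zero])

end Annihilator

section DuBoisReymond

variable {a b : ℝ}

theorem eqOn_zero_of_integral_mul_self_eq_zero (hab : a < b) {g : ℝ → ℝ}
    (hg : ContinuousOn g (Icc a b)) (h : ∫ x in a..b, g x * g x = 0) :
    ∀ x ∈ Icc a b, g x = 0 := by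
  intro x hx
  by_contra hgx
  have := intervalIntegral.integral_pos hab (hg.mul hg) (fun y _ => mul_self_nonneg (g y))
    ⟨x, hx, mul_self_pos.2 hgx⟩
  exact this.ne' h

/-- Du Bois-Reymond: test against `h` minus its mean. -/
theorem eqOn_of_forall_integral_mul_eq_zero (hab : a < b) {h : ℝ → ℝ} (hh : Continuous h)
    (hz : ∀ g : ℝ → ℝ, Continuous g → ∫ x in a..b, g x = 0 → ∫ x in a..b, g x * h x = 0) :
    ∀ x ∈ Icc a b, h x = h a := by
  set m := (b - a)⁻¹ * ∫ x in a..b, h x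
  set g := fun x => h x - m
  have hg : Continuous g := hh.sub continuous_const
  have hg0 : ∫ x in a..b, g x = 0 := by
    simp only [g, intervalIntegral.integral_sub (hh.intervalIntegrable a b)
      intervalIntegrable_const, intervalIntegral.integral_const, smul_eq_mul, m]
    field_simp [sub_ne_zero.2 hab.ne']
    ring
  have hgg : ∫ x in a..b, g x * g x = 0 := calc
    ∫ x in a..b, g x * g x = (∫ x in a..b, g x * h x) - m * ∫ x in a..b, g x := by
      rw [← intervalIntegral.integral_const_mul,
        ← intervalIntegral.integral_sub (f := fun x => g x * h x)
          ((hg.mul hh).intervalIntegrable a b) ((hg.const_mul m).intervalIntegrable a b)]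
      congr 1 with x
      simp only [g]
      ring
    _ = 0 := by rw [hz g hg hg0, hg0, mul_zero, sub_zero]
  have hzero := eqOn_zero_of_integral_mul_self_eq_zero hab hg.continuousOn hgg
  intro x hx
  have := (hzero x hx).trans (hzero a (left_mem_Icc.2 hab.le)).symm
  simpa [g] using this

end DuBoisReymond

section Pairing

variable {E : Type*} [NormedAddCommGroup E] [NormedSpace ℝ E]

/-- With `C`, `Ψ` the primitives of `c`, `ψ` from `a`, skewness of `π` makes the difference of
the two integrands the derivative of `t ↦ -Ψ t v - C t (π (Ψ t))`. -/
theorem integral_apply_sub_apply_primitive {π : (E →L[ℝ] ℝ) →L[ℝ] E}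
    (hπ : ∀ α β : E →L[ℝ] ℝ, α (π β) = - β (π α)) {lam : ℝ → E} {c ψ : ℝ → E →L[ℝ] ℝ}
    (hlam : Continuous lam) (hc : Continuous c) (hψ : Continuous ψ) (v : E) (a b : ℝ) :
    ∫ u in a..b, (c u (lam u) - ψ u (v - π (∫ s in a..u, c s))) =
      (∫ u in a..b, c u (lam u + π (∫ s in a..u, ψ s)))
        - (∫ s in a..b, ψ s) v - (∫ s in a..b, c s) (π (∫ s in a..b, ψ s)) := by
  set C := fun t => ∫ s in a..t, c s
  set Ψ := fun t => ∫ s in a..t, ψ s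
  have hC : ∀ t, HasDerivAt C (c t) t := fun t => (hc.integral_hasStrictDerivAt a t).hasDerivAt
  have hΨ : ∀ t, HasDerivAt Ψ (ψ t) t := fun t => (hψ.integral_hasStrictDerivAt a t).hasDerivAt
  have hderiv : ∀ t ∈ uIcc a b, HasDerivAt (fun t => -Ψ t v - C t (π (Ψ t)))
      (c t (lam t) - ψ t (v - π (C t)) - c t (lam t + π (Ψ t))) t := by
    intro t _
    refine (((hΨ t).clm_apply (hasDerivAt_const t v)).neg.sub
      ((hC t).clm_apply (π.hasFDerivAt.comp_hasDerivAt t (hΨ t)))).congr_deriv ?_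
    simp only [Function.comp_apply, map_sub, map_add, map_zero, add_zero, hπ (C t) (ψ t)]
    ring
  have hFTC := intervalIntegral.integral_eq_sub_of_hasDerivAt hderiv
    (Continuous.intervalIntegrable (by fun_prop) a b)
  rw [intervalIntegral.integral_sub (Continuous.intervalIntegrable (by fun_prop) a b)
    (Continuous.intervalIntegrable (by fun_prop) a b)] at hFTC
  simp only [C, Ψ, intervalIntegral.integral_same, zero_apply, map_zero,
    neg_zero, sub_zero] at hFTC
  linear_combination hFTC

end Pairing

namespace WPair

variable {E : Type*} [NormedAddCommGroup E] [NormedSpace ℝ E] (w : WPair E)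

/-- Only the values on `[0,1]` enter `Omega` and `VSet`; extending them by constants gives
continuous functions on `ℝ`, to which the calculus above applies. -/
noncomputable def extend : WPair E where
  lam := IccExtend zero_le_one ((Icc 0 1).domRestrict w.lam)
  phi := IccExtend zero_le_one ((Icc 0 1).domRestrict w.phi)
  lam_cont := w.lam_cont.domRestrict.Icc_extend'.continuousOn
  phi_cont := w.phi_cont.domRestrict.Icc_extend'.continuousOn

theorem continuous_extend_lam : Continuous w.extend.lam := w.lam_cont.domRestrict.Icc_extend'

theorem continuous_extend_phi : Continuous w.extend.phi := w.phi_cont.domRestrict.Icc_extend'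

variable {w} {u : ℝ}

theorem extend_lam_of_mem (hu : u ∈ Icc (0:ℝ) 1) : w.extend.lam u = w.lam u :=
  IccExtend_of_mem zero_le_one ((Icc 0 1).domRestrict w.lam) hu

theorem extend_phi_of_mem (hu : u ∈ Icc (0:ℝ) 1) : w.extend.phi u = w.phi u :=
  IccExtend_of_mem zero_le_one ((Icc 0 1).domRestrict w.phi) hu

theorem integral_extend_phi_of_mem (hu : u ∈ Icc (0:ℝ) 1) :
    ∫ s in (0:ℝ)..u, w.extend.phi s = ∫ s in (0:ℝ)..u, w.phi s := by
  refine intervalIntegral.integral_congr fun s hs => extend_phi_of_mem ?_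
  rw [uIcc_of_le hu.1] at hs
  exact ⟨hs.1, hs.2.trans hu.2⟩

theorem omega_extend (a : WPair E) : Omega a w.extend = Omega a w := by
  refine intervalIntegral.integral_congr fun s hs => ?_
  rw [uIcc_of_le zero_le_one] at hs
  simp only [extend_lam_of_mem hs, extend_phi_of_mem hs]

theorem mem_VSet_of_extend_mem {E₁ : Type*} [NormedAddCommGroup E₁] [NormedSpace ℝ E₁]
    {π₀ : (E →L[ℝ] ℝ) →ₗ[ℝ] E} {U : E₁ ≃L[ℝ] E} {S₀ : Submodule ℝ E} {S₁ : Submodule ℝ E₁}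
    (h : w.extend ∈ VSet π₀ U S₀ S₁) : w ∈ VSet π₀ U S₀ S₁ := by
  have h0 := extend_lam_of_mem (w := w) (left_mem_Icc.2 zero_le_one)
  have h1 := extend_lam_of_mem (w := w) (right_mem_Icc.2 zero_le_one)
  obtain ⟨hode, hS₀, hS₁⟩ := h
  refine ⟨fun u hu => ?_, h0 ▸ hS₀, h1 ▸ hS₁⟩
  rw [← extend_lam_of_mem hu, ← h0, ← integral_extend_phi_of_mem hu]
  exact hode u hu

end WPair

section Orthogonal

variable {E₀ E₁ : Type*} [NormedAddCommGroup E₀] [NormedSpace ℝ E₀] [FiniteDimensional ℝ E₀]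
  [NormedAddCommGroup E₁] [NormedSpace ℝ E₁] {π₀ : (E₀ →L[ℝ] ℝ) →ₗ[ℝ] E₀}

noncomputable def testPair (π₀ : (E₀ →L[ℝ] ℝ) →ₗ[ℝ] E₀) (v : E₀) {c : ℝ → E₀ →L[ℝ] ℝ}
    (hc : Continuous c) : WPair E₀ where
  lam u := v - π₀ (∫ s in (0:ℝ)..u, c s)
  phi := c
  lam_cont := (continuous_const.sub (π₀.continuous_of_finiteDimensional.comp
    (intervalIntegral.continuous_primitive (fun a b => hc.intervalIntegrable a b) 0))).continuousOn
  phi_cont := hc.continuousOn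

theorem testPair_mem_VSet {U : E₁ ≃L[ℝ] E₀} {T₀ : Submodule ℝ E₀} {T₁ : Submodule ℝ E₁}
    {v : E₀} {c : ℝ → E₀ →L[ℝ] ℝ} (hc : Continuous c) (hv : v ∈ T₀)
    (h1 : U.symm (v - π₀ (∫ s in (0:ℝ)..1, c s)) ∈ T₁) : testPair π₀ v hc ∈ VSet π₀ U T₀ T₁ :=
  ⟨fun u _ => by simp [testPair], by simpa [testPair] using hv, h1⟩

theorem omega_testPair (hπ₀ : ∀ α β : E₀ →L[ℝ] ℝ, α (π₀ β) = - β (π₀ α)) {w : WPair E₀}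
    (hlam : Continuous w.lam) (hphi : Continuous w.phi) (v : E₀) {c : ℝ → E₀ →L[ℝ] ℝ}
    (hc : Continuous c) :
    Omega (testPair π₀ v hc) w =
      (∫ u in (0:ℝ)..1, c u (w.lam u + π₀ (∫ s in (0:ℝ)..u, w.phi s)))
        - (∫ s in (0:ℝ)..1, w.phi s) v - (∫ s in (0:ℝ)..1, c s) (π₀ (∫ s in (0:ℝ)..1, w.phi s)) :=
  integral_apply_sub_apply_primitive (π := LinearMap.toContinuousLinearMap π₀) hπ₀ hlam hc hphi
    v 0 1

variable {U : E₁ ≃L[ℝ] E₀} {T₀ : Submodule ℝ E₀} {T₁ : Submodule ℝ E₁} {w : WPair E₀}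

/-- Orthogonality to the test pairs with `v = 0` and `c = g • α`, `∫₀¹ g = 0`, makes
`α (λ u + π₀ ∫₀ᵘ φ)` constant by du Bois-Reymond. -/
theorem lam_add_primitive_eq_of_mem_orth (hπ₀ : ∀ α β : E₀ →L[ℝ] ℝ, α (π₀ β) = - β (π₀ α))
    (hw : w ∈ orth (VSet π₀ U T₀ T₁)) (hlam : Continuous w.lam) (hphi : Continuous w.phi)
    {u : ℝ} (hu : u ∈ Icc (0:ℝ) 1) :
    w.lam u + π₀ (∫ s in (0:ℝ)..u, w.phi s) = w.lam 0 := by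
  set μ := fun u => w.lam u + π₀ (∫ s in (0:ℝ)..u, w.phi s)
  have hμ : Continuous μ := hlam.add (π₀.continuous_of_finiteDimensional.comp
    (intervalIntegral.continuous_primitive (fun a b => hphi.intervalIntegrable a b) 0))
  have hμ0 : μ 0 = w.lam 0 := by simp [μ]
  rw [← hμ0]
  refine (SeparatingDual.eq_iff_forall_dual_eq (R := ℝ)).2 fun α => ?_
  refine eqOn_of_forall_integral_mul_eq_zero zero_lt_one (α.continuous.comp hμ)
    (fun g hg hg0 => ?_) u hu
  have hc : Continuous fun s => g s • α := hg.smul continuous_const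
  have hC1 : ∫ s in (0:ℝ)..1, g s • α = 0 := by
    rw [intervalIntegral.integral_smul_const, hg0, zero_smul]
  have h := omega_testPair hπ₀ hlam hphi 0 hc
  rw [hw _ (testPair_mem_VSet hc T₀.zero_mem (by simp [hC1])), hC1] at h
  simpa [μ] using h.symm

theorem apply_lam_one_eq_of_mem_orth (hπ₀ : ∀ α β : E₀ →L[ℝ] ℝ, α (π₀ β) = - β (π₀ α))
    (hw : w ∈ orth (VSet π₀ U T₀ T₁)) (hlam : Continuous w.lam) (hphi : Continuous w.phi)
    {α : E₀ →L[ℝ] ℝ} {v : E₀} (hv : v ∈ T₀) (hα : U.symm (v - π₀ α) ∈ T₁) :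
    α (w.lam 1) = (∫ s in (0:ℝ)..1, w.phi s) v := by
  have hc : Continuous fun _ : ℝ => α := continuous_const
  have hC1 : ∫ _ in (0:ℝ)..1, α = α := by simp
  have h := omega_testPair hπ₀ hlam hphi v hc
  rw [hw _ (testPair_mem_VSet hc hv (by rwa [hC1])), hC1] at h
  have hconst : ∫ u in (0:ℝ)..1, α (w.lam u + π₀ (∫ s in (0:ℝ)..u, w.phi s)) = α (w.lam 0) := by
    rw [intervalIntegral.integral_congr (g := fun _ => α (w.lam 0)) fun u hu => ?_]
    · simp
    rw [uIcc_of_le zero_le_one] at hu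
    simp only [lam_add_primitive_eq_of_mem_orth hπ₀ hw hlam hphi hu]
  rw [hconst, ← lam_add_primitive_eq_of_mem_orth hπ₀ hw hlam hphi (right_mem_Icc.2 zero_le_one),
    map_add] at h
  linarith

theorem mem_VSet_map_annSubmodule_of_mem_orth {π₁ : (E₁ →L[ℝ] ℝ) →ₗ[ℝ] E₁}
    [FiniteDimensional ℝ E₁]
    (hπ₀ : ∀ α β : E₀ →L[ℝ] ℝ, α (π₀ β) = - β (π₀ α))
    (hπ₁ : ∀ α β : E₁ →L[ℝ] ℝ, α (π₁ β) = - β (π₁ α))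
    (hU : ∀ α : E₀ →L[ℝ] ℝ, U (π₁ (α.comp (U : E₁ →L[ℝ] E₀))) = π₀ α)
    (hw : w ∈ orth (VSet π₀ U T₀ T₁)) (hlam : Continuous w.lam) (hphi : Continuous w.phi) :
    w ∈ VSet π₀ U ((annSubmodule T₀).map π₀) ((annSubmodule T₁).map π₁) := by
  have hode {u : ℝ} (hu : u ∈ Icc (0:ℝ) 1) := lam_add_primitive_eq_of_mem_orth hπ₀ hw hlam hphi hu
  refine ⟨fun u hu => eq_sub_of_add_eq (hode hu), ?_, ?_⟩
  · refine mem_map_annSubmodule_of_forall hπ₀ fun α hα => ?_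
    have h := apply_lam_one_eq_of_mem_orth hπ₀ hw hlam hphi (α := α) hα (by simp)
    rw [← hode (right_mem_Icc.2 zero_le_one), map_add, h, hπ₀, neg_add_cancel]
  · refine mem_map_annSubmodule_of_forall hπ₁ fun β hβ => ?_
    have hβU : π₀ (β.comp (U.symm : E₀ →L[ℝ] E₁)) = U (π₁ β) := by
      rw [← hU]
      congr
      ext
      simp
    have h := apply_lam_one_eq_of_mem_orth hπ₀ hw hlam hphi (α := β.comp (U.symm : E₀ →L[ℝ] E₁))
      T₀.zero_mem (by rw [hβU, zero_sub, map_neg, U.symm_apply_apply]; exact T₁.neg_mem hβ)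
    simpa using h

end Orthogonal

theorem orth_VSet_subset_explicit
    (E₀ E₁ : Type*)
    [NormedAddCommGroup E₀] [NormedSpace ℝ E₀] [FiniteDimensional ℝ E₀]
    [NormedAddCommGroup E₁] [NormedSpace ℝ E₁] [FiniteDimensional ℝ E₁]
    (π₀ : (E₀ →L[ℝ] ℝ) →ₗ[ℝ] E₀) (π₁ : (E₁ →L[ℝ] ℝ) →ₗ[ℝ] E₁)
    (hskew₀ : ∀ α β : E₀ →L[ℝ] ℝ, α (π₀ β) = - β (π₀ α))
    (hskew₁ : ∀ α β : E₁ →L[ℝ] ℝ, α (π₁ β) = - β (π₁ α))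
    (U : E₁ ≃L[ℝ] E₀)
    (hU : ∀ α : E₀ →L[ℝ] ℝ, U (π₁ (α.comp (U : E₁ →L[ℝ] E₀))) = π₀ α)
    (T₀ : Submodule ℝ E₀) (T₁ : Submodule ℝ E₁)
    (w : WPair E₀) (hw : w ∈ orth (VSet π₀ U T₀ T₁)) :
    (∀ u ∈ Icc (0:ℝ) 1, w.lam u = w.lam 0 - π₀ (∫ s in (0:ℝ)..u, w.phi s)) ∧
      w.lam 0 ∈ π₀ '' Ann T₀ ∧ U.symm (w.lam 1) ∈ π₁ '' Ann T₁ := by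
  have hw' : w.extend ∈ orth (VSet π₀ U T₀ T₁) := fun a ha => (w.omega_extend a).trans (hw a ha)
  -- the conclusion unfolds to `w ∈ VSet π₀ U (π₀ N₀) (π₁ N₁)`
  exact WPair.mem_VSet_of_extend_mem (mem_VSet_map_annSubmodule_of_mem_orth hskew₀ hskew₁ hU hw'
    w.continuous_extend_lam w.continuous_extend_phi)
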